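/- arXiv:2408.09364 — 2 statements merged into one kernel-verified Lean document; each statement's English description precedes it below -/
import Mathlib

section
/- Let α > 0, h ∈ C₀([0,∞)), c ∈ ℝ, and define f(x) := G⁰_α h(x) + c·e^{−√(2α)x} for x > 0. Then f is twice differentiable on (0,∞) with f''(x) = 2α·G⁰_α h(x) − 2h(x) + 2αc·e^{−√(2α)x} for all x > 0, and the one-sided limits exist with lim_{x→0⁺} f'(x) = 2·∫₀^∞ h(y)·e^{−√(2α)y} dy − √(2α)·c and lim_{x→0⁺} f''(x) = −2h(0) + 2αc. -/
/-!
With `β = √(2α)`, splitting the kernel at `y = x` gives, for `x > 0`,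
`G⁰_α h(x) = (2/β) (e^{-βx} ∫₀ˣ sinh(βy) h(y) dy + sinh(βx) ∫ₓ^∞ e^{-βy} h(y) dy)`.
Differentiating by the fundamental theorem of calculus, the boundary terms cancel in the first
derivative, `2 (cosh(βx) ∫ₓ^∞ e^{-βy} h - e^{-βx} ∫₀ˣ sinh(βy) h)`, and in the second they add up to
`-2 h(x) e^{-βx} (cosh(βx) + sinh(βx)) = -2 h(x)`, leaving `β² G⁰_α h(x) - 2 h(x)`. Both integrals
are continuous at `0⁺`, the first one vanishing there, which gives the boundary limits.
-/

open MeasureTheory Real Filter Topology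

/-- The resolvent density of killed Brownian motion on `(0,∞)`. -/
noncomputable def g0 (α x y : ℝ) : ℝ :=
  (2 / Real.sqrt (2 * α)) * Real.sinh (Real.sqrt (2 * α) * min x y) *
    Real.exp (-(Real.sqrt (2 * α) * max x y))

/-- The resolvent `G⁰_α h` of killed Brownian motion on `(0,∞)`. -/
noncomputable def G0 (α : ℝ) (h : ℝ → ℝ) (x : ℝ) : ℝ :=
  ∫ y in Set.Ioi (0 : ℝ), g0 α x y * h y

/-- `h ∈ C₀([0,∞))`: continuous on `[0,∞)` and vanishing at infinity. -/
def MemC0 (h : ℝ → ℝ) : Prop :=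
  ContinuousOn h (Set.Ici 0) ∧ Filter.Tendsto h Filter.atTop (nhds 0)

open Set

section Primitive

variable {g : ℝ → ℝ} {x : ℝ}

lemma hasDerivAt_integral_zero_of_continuousOn_Ici (hg : ContinuousOn g (Ici 0)) (hx : 0 < x) :
    HasDerivAt (fun u => ∫ y in 0..u, g y) (g x) x :=
  intervalIntegral.integral_hasDerivAt_right
    (hg.mono (by rw [uIcc_of_le hx.le]; exact Icc_subset_Ici_self)).intervalIntegrable
    ((hg.mono Ioi_subset_Ici_self).stronglyMeasurableAtFilter isOpen_Ioi x hx)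
    ((hg.mono Ioi_subset_Ici_self).continuousAt (Ioi_mem_nhds hx))

lemma tendsto_integral_zero_nhdsGT_of_continuousOn_Ici (hg : ContinuousOn g (Ici 0)) :
    Tendsto (fun u => ∫ y in 0..u, g y) (𝓝[>] 0) (𝓝 0) := by
  have hcont := intervalIntegral.continuousOn_primitive_interval (μ := volume) (a := 0) (b := 1)
    ((hg.mono (by rw [uIcc_of_le zero_le_one]; exact Icc_subset_Ici_self)).integrableOn_compact
      isCompact_uIcc) 0 left_mem_uIcc
  rw [uIcc_of_le zero_le_one] at hcont
  simpa using (hcont.mono_of_mem_nhdsWithin (Icc_mem_nhdsGT one_pos)).tendsto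

lemma integral_Ioi_eq_sub_integral (hint : IntegrableOn g (Ioi 0)) (hx : 0 ≤ x) :
    ∫ y in Ioi x, g y = (∫ y in Ioi 0, g y) - ∫ y in 0..x, g y := by
  rw [← intervalIntegral.integral_Ioi_sub_Ioi hint hx, sub_sub_cancel]

lemma hasDerivAt_integral_Ioi_of_continuousOn_Ici (hg : ContinuousOn g (Ici 0))
    (hint : IntegrableOn g (Ioi 0)) (hx : 0 < x) :
    HasDerivAt (fun u => ∫ y in Ioi u, g y) (-g x) x := by
  refine ((hasDerivAt_integral_zero_of_continuousOn_Ici hg hx).const_sub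
    (∫ y in Ioi 0, g y)).congr_of_eventuallyEq ?_
  filter_upwards [Ioi_mem_nhds hx] with u hu
  exact integral_Ioi_eq_sub_integral hint hu.le

lemma tendsto_integral_Ioi_nhdsGT_zero (hg : ContinuousOn g (Ici 0))
    (hint : IntegrableOn g (Ioi 0)) :
    Tendsto (fun u => ∫ y in Ioi u, g y) (𝓝[>] 0) (𝓝 (∫ y in Ioi 0, g y)) := by
  have hlim := (tendsto_integral_zero_nhdsGT_of_continuousOn_Ici hg).const_sub (∫ y in Ioi 0, g y)
  rw [sub_zero] at hlim
  refine hlim.congr' ?_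
  filter_upwards [self_mem_nhdsWithin] with u hu
  exact (integral_Ioi_eq_sub_integral hint (le_of_lt hu)).symm

end Primitive

lemma MemC0.exists_bound {h : ℝ → ℝ} (hh : MemC0 h) : ∃ M, ∀ y ∈ Ici (0 : ℝ), |h y| ≤ M := by
  obtain ⟨N, hN⟩ := Metric.tendsto_atTop.mp hh.2 1 one_pos
  obtain ⟨M, hM⟩ := (isCompact_Icc (a := (0 : ℝ)) (b := N)).exists_bound_of_continuousOn
    (hh.1.mono Icc_subset_Ici_self)
  refine ⟨max M 1, fun y hy => ?_⟩
  rcases le_total y N with hyN | hNy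
  · exact (hM y ⟨hy, hyN⟩).trans (le_max_left _ _)
  · simpa using (hN y hNy).le.trans (le_max_right M 1)

lemma MemC0.integrableOn_exp_mul {h : ℝ → ℝ} (hh : MemC0 h) {β : ℝ} (hβ : 0 < β) :
    IntegrableOn (fun y => exp (-(β * y)) * h y) (Ioi 0) := by
  obtain ⟨M, hM⟩ := hh.exists_bound
  refine Integrable.mul_bdd (c := M) ?_ ((hh.1.mono Ioi_subset_Ici_self).aestronglyMeasurable
    measurableSet_Ioi) ?_
  · exact (exp_neg_integrableOn_Ioi 0 hβ).congr_fun (fun y _ => by simp only [neg_mul])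
      measurableSet_Ioi
  · filter_upwards [ae_restrict_mem measurableSet_Ioi] with y hy
    exact hM y (Ioi_subset_Ici_self hy)

lemma g0_of_le {α x y : ℝ} (hyx : y ≤ x) :
    g0 α x y = 2 / √(2 * α) * exp (-(√(2 * α) * x)) * sinh (√(2 * α) * y) := by
  rw [g0, min_eq_right hyx, max_eq_left hyx]; ring

lemma g0_of_ge {α x y : ℝ} (hxy : x ≤ y) :
    g0 α x y = 2 / √(2 * α) * sinh (√(2 * α) * x) * exp (-(√(2 * α) * y)) := by
  rw [g0, min_eq_left hxy, max_eq_right hxy]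

lemma hasDerivAt_exp_neg_mul (β x : ℝ) :
    HasDerivAt (fun x => exp (-(β * x))) (-β * exp (-(β * x))) x := by
  simpa [mul_comm] using (((hasDerivAt_id x).const_mul β).neg).exp

section Resolvent

variable {β : ℝ} {h : ℝ → ℝ} {x : ℝ}

noncomputable def sinhPrimitive (β : ℝ) (h : ℝ → ℝ) (x : ℝ) : ℝ :=
  ∫ y in 0..x, sinh (β * y) * h y

noncomputable def expTail (β : ℝ) (h : ℝ → ℝ) (x : ℝ) : ℝ :=
  ∫ y in Ioi x, exp (-(β * y)) * h y

noncomputable def resolventFormula (β : ℝ) (h : ℝ → ℝ) (x : ℝ) : ℝ :=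
  2 / β * (exp (-(β * x)) * sinhPrimitive β h x + sinh (β * x) * expTail β h x)

noncomputable def resolventDeriv (β : ℝ) (h : ℝ → ℝ) (x : ℝ) : ℝ :=
  2 * (cosh (β * x) * expTail β h x - exp (-(β * x)) * sinhPrimitive β h x)

lemma G0_eq_resolventFormula {α : ℝ} (hh : ContinuousOn h (Ici 0))
    (hint : IntegrableOn (fun y => exp (-(√(2 * α) * y)) * h y) (Ioi 0)) (hx : 0 < x) :
    G0 α h x = resolventFormula (√(2 * α)) h x := by
  set β := √(2 * α)
  have hleft : EqOn (fun y => g0 α x y * h y)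
      (fun y => 2 / β * exp (-(β * x)) * (sinh (β * y) * h y)) (uIcc 0 x) := by
    intro y hy
    rw [uIcc_of_le hx.le] at hy
    simp only [g0_of_le hy.2]; ring
  have hright : EqOn (fun y => 2 / β * sinh (β * x) * (exp (-(β * y)) * h y))
      (fun y => g0 α x y * h y) (Ioi x) := by
    intro y hy
    simp only [g0_of_ge (le_of_lt hy)]; ring
  have hleft_int : IntervalIntegrable (fun y => g0 α x y * h y) volume 0 x :=
    ((by unfold g0; fun_prop : Continuous (g0 α x)).continuousOn.mul
      (hh.mono (by rw [uIcc_of_le hx.le]; exact Icc_subset_Ici_self))).intervalIntegrable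
  have hright_int : IntegrableOn (fun y => g0 α x y * h y) (Ioi x) :=
    IntegrableOn.congr_fun ((hint.mono_set (Ioi_subset_Ioi hx.le)).const_mul _) hright
      measurableSet_Ioi
  rw [G0, ← intervalIntegral.integral_interval_add_Ioi' hleft_int hright_int,
    intervalIntegral.integral_congr hleft, ← setIntegral_congr_fun measurableSet_Ioi hright,
    intervalIntegral.integral_const_mul, integral_const_mul, resolventFormula, sinhPrimitive,
    expTail]
  ring

lemma hasDerivAt_sinhPrimitive (β : ℝ) (hh : ContinuousOn h (Ici 0)) (hx : 0 < x) :
    HasDerivAt (sinhPrimitive β h) (sinh (β * x) * h x) x :=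
  hasDerivAt_integral_zero_of_continuousOn_Ici
    ((by fun_prop : Continuous fun y => sinh (β * y)).continuousOn.mul hh) hx

lemma hasDerivAt_expTail (hh : ContinuousOn h (Ici 0))
    (hint : IntegrableOn (fun y => exp (-(β * y)) * h y) (Ioi 0)) (hx : 0 < x) :
    HasDerivAt (expTail β h) (-(exp (-(β * x)) * h x)) x :=
  hasDerivAt_integral_Ioi_of_continuousOn_Ici
    ((by fun_prop : Continuous fun y => exp (-(β * y))).continuousOn.mul hh) hint hx

lemma hasDerivAt_resolventFormula (hβ : β ≠ 0) (hh : ContinuousOn h (Ici 0))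
    (hint : IntegrableOn (fun y => exp (-(β * y)) * h y) (Ioi 0)) (hx : 0 < x) :
    HasDerivAt (resolventFormula β h) (resolventDeriv β h x) x := by
  have hsinh : HasDerivAt (fun x => sinh (β * x)) (β * cosh (β * x)) x := by
    simpa [mul_comm] using ((hasDerivAt_id x).const_mul β).sinh
  refine ((((hasDerivAt_exp_neg_mul β x).mul (hasDerivAt_sinhPrimitive β hh hx)).add
    (hsinh.mul (hasDerivAt_expTail hh hint hx))).const_mul (2 / β)).congr_deriv ?_
  rw [resolventDeriv]
  field_simp
  ring

lemma hasDerivAt_resolventDeriv (hβ : β ≠ 0) (hh : ContinuousOn h (Ici 0))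
    (hint : IntegrableOn (fun y => exp (-(β * y)) * h y) (Ioi 0)) (hx : 0 < x) :
    HasDerivAt (resolventDeriv β h) (β ^ 2 * resolventFormula β h x - 2 * h x) x := by
  have hcosh : HasDerivAt (fun x => cosh (β * x)) (β * sinh (β * x)) x := by
    simpa [mul_comm] using ((hasDerivAt_id x).const_mul β).cosh
  have hexp_cosh_sinh : exp (-(β * x)) * (cosh (β * x) + sinh (β * x)) = 1 := by
    rw [cosh_add_sinh, ← exp_add, neg_add_cancel, exp_zero]
  refine (((hcosh.mul (hasDerivAt_expTail hh hint hx)).sub ((hasDerivAt_exp_neg_mul β x).mul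
    (hasDerivAt_sinhPrimitive β hh hx))).const_mul 2).congr_deriv ?_
  have hβ2 : β ^ 2 * (2 / β) = 2 * β := by field_simp
  rw [resolventFormula]
  linear_combination (-2 * h x) * hexp_cosh_sinh -
    (exp (-(β * x)) * sinhPrimitive β h x + sinh (β * x) * expTail β h x) * hβ2

lemma tendsto_sinhPrimitive_nhdsGT_zero (β : ℝ) (hh : ContinuousOn h (Ici 0)) :
    Tendsto (sinhPrimitive β h) (𝓝[>] 0) (𝓝 0) :=
  tendsto_integral_zero_nhdsGT_of_continuousOn_Ici
    ((by fun_prop : Continuous fun y => sinh (β * y)).continuousOn.mul hh)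

lemma tendsto_expTail_nhdsGT_zero (hh : ContinuousOn h (Ici 0))
    (hint : IntegrableOn (fun y => exp (-(β * y)) * h y) (Ioi 0)) :
    Tendsto (expTail β h) (𝓝[>] 0) (𝓝 (∫ y in Ioi 0, exp (-(β * y)) * h y)) :=
  tendsto_integral_Ioi_nhdsGT_zero
    ((by fun_prop : Continuous fun y => exp (-(β * y))).continuousOn.mul hh) hint

lemma tendsto_resolventFormula_nhdsGT_zero (hh : ContinuousOn h (Ici 0))
    (hint : IntegrableOn (fun y => exp (-(β * y)) * h y) (Ioi 0)) :
    Tendsto (resolventFormula β h) (𝓝[>] 0) (𝓝 0) := by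
  have hlim := (((by fun_prop : Continuous fun x => exp (-(β * x))).continuousWithinAt.tendsto.mul
    (tendsto_sinhPrimitive_nhdsGT_zero β hh)).add
    ((by fun_prop : Continuous fun x => sinh (β * x)).continuousWithinAt.tendsto.mul
    (tendsto_expTail_nhdsGT_zero hh hint))).const_mul (2 / β)
  simp only [mul_zero, neg_zero, exp_zero, sinh_zero, zero_mul, add_zero] at hlim
  exact hlim

lemma tendsto_resolventDeriv_nhdsGT_zero (hh : ContinuousOn h (Ici 0))
    (hint : IntegrableOn (fun y => exp (-(β * y)) * h y) (Ioi 0)) :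
    Tendsto (resolventDeriv β h) (𝓝[>] 0) (𝓝 (2 * ∫ y in Ioi 0, exp (-(β * y)) * h y)) := by
  have hlim := (((by fun_prop : Continuous fun x => cosh (β * x)).continuousWithinAt.tendsto.mul
    (tendsto_expTail_nhdsGT_zero hh hint)).sub
    ((by fun_prop : Continuous fun x => exp (-(β * x))).continuousWithinAt.tendsto.mul
    (tendsto_sinhPrimitive_nhdsGT_zero β hh))).const_mul 2
  simp only [mul_zero, neg_zero, exp_zero, cosh_zero, one_mul, sub_zero] at hlim
  exact hlim

lemma hasDerivAt_resolventFormula_add_exp (hβ : β ≠ 0) (hh : ContinuousOn h (Ici 0))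
    (hint : IntegrableOn (fun y => exp (-(β * y)) * h y) (Ioi 0)) (c : ℝ) (hx : 0 < x) :
    HasDerivAt (fun x => resolventFormula β h x + c * exp (-(β * x)))
      (resolventDeriv β h x - β * c * exp (-(β * x))) x :=
  ((hasDerivAt_resolventFormula hβ hh hint hx).add
    ((hasDerivAt_exp_neg_mul β x).const_mul c)).congr_deriv (by ring)

lemma hasDerivAt_resolventDeriv_sub_exp (hβ : β ≠ 0) (hh : ContinuousOn h (Ici 0))
    (hint : IntegrableOn (fun y => exp (-(β * y)) * h y) (Ioi 0)) (c : ℝ) (hx : 0 < x) :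
    HasDerivAt (fun x => resolventDeriv β h x - β * c * exp (-(β * x)))
      (β ^ 2 * (resolventFormula β h x + c * exp (-(β * x))) - 2 * h x) x :=
  ((hasDerivAt_resolventDeriv hβ hh hint hx).sub
    ((hasDerivAt_exp_neg_mul β x).const_mul (β * c))).congr_deriv (by ring)

end Resolvent

/-- For `α > 0`, `h ∈ C₀([0,∞))`, `c ∈ ℝ` and `f(x) = G⁰_α h(x) + c·e^{−√(2α)x}`:
`f` is twice differentiable on `(0,∞)` with
`f''(x) = 2α·G⁰_α h(x) − 2h(x) + 2αc·e^{−√(2α)x}`, and the one-sided limits at `0⁺`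
of `f'` and `f''` are `2·∫₀^∞ h(y)e^{−√(2α)y} dy − √(2α)·c` and `−2h(0) + 2αc`. -/
theorem stmt4 (α : ℝ) (hα : 0 < α) (h : ℝ → ℝ) (hh : MemC0 h) (c : ℝ)
    (f : ℝ → ℝ)
    (hf : ∀ x, f x = G0 α h x + c * Real.exp (-(Real.sqrt (2 * α) * x))) :
    (∀ x ∈ Set.Ioi (0 : ℝ),
      DifferentiableAt ℝ f x ∧ DifferentiableAt ℝ (deriv f) x ∧
        deriv (deriv f) x =
          2 * α * G0 α h x - 2 * h x +
            2 * α * c * Real.exp (-(Real.sqrt (2 * α) * x))) ∧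
    Filter.Tendsto (deriv f) (nhdsWithin 0 (Set.Ioi 0))
      (nhds (2 * (∫ y in Set.Ioi (0 : ℝ), h y * Real.exp (-(Real.sqrt (2 * α) * y))) -
        Real.sqrt (2 * α) * c)) ∧
    Filter.Tendsto (deriv (deriv f)) (nhdsWithin 0 (Set.Ioi 0))
      (nhds (-2 * h 0 + 2 * α * c)) := by
  set β := √(2 * α)
  have hβ : 0 < β := sqrt_pos.2 (by positivity)
  have hβsq : β ^ 2 = 2 * α := sq_sqrt (by positivity)
  have hint := hh.integrableOn_exp_mul hβ
  have hf_eq : ∀ x ∈ Ioi (0 : ℝ), f x = resolventFormula β h x + c * exp (-(β * x)) :=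
    fun x hx => by rw [hf, G0_eq_resolventFormula hh.1 hint hx]
  have hf' : ∀ x ∈ Ioi (0 : ℝ), HasDerivAt f (resolventDeriv β h x - β * c * exp (-(β * x))) x :=
    fun x hx => (hasDerivAt_resolventFormula_add_exp hβ.ne' hh.1 hint c hx).congr_of_eventuallyEq
      (eventually_of_mem (Ioi_mem_nhds hx) hf_eq)
  have hf'' : ∀ x ∈ Ioi (0 : ℝ), HasDerivAt (deriv f) (2 * α * f x - 2 * h x) x := by
    intro x hx
    rw [hf_eq x hx, ← hβsq]
    exact (hasDerivAt_resolventDeriv_sub_exp hβ.ne' hh.1 hint c hx).congr_of_eventuallyEq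
      (eventually_of_mem (Ioi_mem_nhds hx) fun y hy => (hf' y hy).deriv)
  have hexp_lim : Tendsto (fun x => exp (-(β * x))) (𝓝[>] 0) (𝓝 1) := by
    simpa using ((by fun_prop : Continuous fun x => exp (-(β * x))).tendsto 0).mono_left
      nhdsWithin_le_nhds
  refine ⟨fun x hx => ⟨(hf' x hx).differentiableAt, (hf'' x hx).differentiableAt, ?_⟩, ?_, ?_⟩
  · rw [(hf'' x hx).deriv, hf]
    ring
  · have hlim := (tendsto_resolventDeriv_nhdsGT_zero hh.1 hint).sub (hexp_lim.const_mul (β * c))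
    convert hlim.congr' (eventually_nhdsWithin_of_forall fun x hx => (hf' x hx).deriv.symm)
      using 2
    simp_rw [mul_one, mul_comm (h _)]
  · have hf_lim : Tendsto f (𝓝[>] 0) (𝓝 c) := by
      simpa using ((tendsto_resolventFormula_nhdsGT_zero hh.1 hint).add
        (hexp_lim.const_mul c)).congr'
          (eventually_nhdsWithin_of_forall fun x hx => (hf_eq x hx).symm)
    have hh_lim : Tendsto h (𝓝[>] 0) (𝓝 (h 0)) :=
      (hh.1 0 self_mem_Ici).tendsto.mono_left (nhdsWithin_mono 0 Ioi_subset_Ici_self)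
    convert ((hf_lim.const_mul (2 * α)).sub (hh_lim.const_mul 2)).congr'
      (eventually_nhdsWithin_of_forall fun x hx => (hf'' x hx).deriv.symm) using 2
    ring
end

section
/- Let α > 0 and let p₄ be a positive Borel measure on (0,∞) with ∫_{(0,∞)} min(1,x) p₄(dx) < ∞. Then for every y > 0 the integral ∫_{(0,∞)} g⁰_α(x,y) p₄(dx) is finite, and if the function y ↦ e^{√(2α)y}·∫_{(0,∞)} g⁰_α(x,y) p₄(dx) is constant on (0,∞), then p₄ is the null measure. -/
open MeasureTheory Real Filter Topology

/-!
Write `c = √(2α)`. Since `sinh s · e^{-t} ≤ sinh s · e^{-s} = (1 - e^{-2s})/2` for `s ≤ t`,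
the kernel satisfies `g⁰_α(x,y) ≤ min(2x, 1/c) ≤ max(2, 1/c) · min(1,x)`, which gives
integrability, and by dominated convergence `∫ g⁰_α(x,y) p₄(dx) → 0` as `y → 0⁺`. A constant
value of `y ↦ e^{cy} ∫ g⁰_α(x,y) p₄(dx)` is therefore `0`, so `∫ g⁰_α(x,1) p₄(dx) = 0`; as
`g⁰_α > 0` on `(0,∞)²`, this forces `p₄(0,∞) = 0`.
-/

lemma sinh_mul_exp_neg_le {s t : ℝ} (hs : 0 ≤ s) (hst : s ≤ t) :
    sinh s * exp (-t) ≤ min s (1 / 2) := by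
  have h_le : sinh s * exp (-t) ≤ (1 - exp (-2 * s)) / 2 := by
    have h_eq : sinh s * exp (-s) = (1 - exp (-2 * s)) / 2 := by
      have h_inv : exp s * exp (-s) = 1 := by rw [← exp_add, add_neg_cancel, exp_zero]
      rw [sinh_eq, show -2 * s = -s + -s by ring, exp_add]
      linear_combination h_inv / 2
    rw [← h_eq]
    exact mul_le_mul_of_nonneg_left (exp_le_exp.2 (neg_le_neg hst)) (sinh_nonneg_iff.2 hs)
  refine le_min (h_le.trans ?_) (h_le.trans ?_)
  · linarith [add_one_le_exp (-2 * s)]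
  · linarith [exp_pos (-2 * s)]

lemma g0_nonneg (α : ℝ) {x y : ℝ} (hx : 0 ≤ x) (hy : 0 ≤ y) : 0 ≤ g0 α x y := by
  unfold g0
  have : 0 ≤ sinh (√(2 * α) * min x y) := sinh_nonneg_iff.2 (by positivity)
  positivity

lemma g0_pos {α x y : ℝ} (hα : 0 < α) (hx : 0 < x) (hy : 0 < y) : 0 < g0 α x y := by
  unfold g0
  have : 0 < sinh (√(2 * α) * min x y) := sinh_pos_iff.2 (by positivity)
  positivity

lemma g0_zero_right (α : ℝ) {x : ℝ} (hx : 0 ≤ x) : g0 α x 0 = 0 := by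
  simp [g0, min_eq_right hx]

lemma continuous_g0_left (α y : ℝ) : Continuous fun x => g0 α x y := by
  unfold g0; fun_prop

lemma continuous_g0_right (α x : ℝ) : Continuous fun y => g0 α x y := by
  unfold g0; fun_prop

lemma g0_le_mul_min_one {α x y : ℝ} (hα : 0 < α) (hx : 0 ≤ x) (hy : 0 ≤ y) :
    g0 α x y ≤ max 2 (√(2 * α))⁻¹ * min 1 x := by
  set c := √(2 * α)
  have hc : 0 < c := sqrt_pos.2 (by linarith)
  have h_sinh := sinh_mul_exp_neg_le (s := c * min x y) (t := c * max x y) (by positivity)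
    (mul_le_mul_of_nonneg_left min_le_max hc.le)
  have h_eq : g0 α x y = 2 / c * (sinh (c * min x y) * exp (-(c * max x y))) := by
    rw [g0]; ring
  have h_le_x : g0 α x y ≤ 2 * x := by
    calc g0 α x y ≤ 2 / c * (c * min x y) := by
          rw [h_eq]
          exact mul_le_mul_of_nonneg_left (h_sinh.trans (min_le_left _ _)) (by positivity)
      _ = 2 * min x y := by field_simp
      _ ≤ 2 * x := by gcongr; exact min_le_left _ _
  have h_le_inv : g0 α x y ≤ c⁻¹ := by
    calc g0 α x y ≤ 2 / c * (1 / 2) := by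
          rw [h_eq]
          exact mul_le_mul_of_nonneg_left (h_sinh.trans (min_le_right _ _)) (by positivity)
      _ = c⁻¹ := by ring
  rcases le_total x 1 with h | h
  · rw [min_eq_right h]; nlinarith [le_max_left 2 c⁻¹]
  · rw [min_eq_left h, mul_one]; exact h_le_inv.trans (le_max_right _ _)

section

variable {α : ℝ} {μ : Measure ℝ}

lemma integrableOn_min_one_of_lintegral_lt_top
    (h : ∫⁻ x in Set.Ioi 0, ENNReal.ofReal (min 1 x) ∂μ < ⊤) :
    IntegrableOn (fun x => min 1 x) (Set.Ioi 0) μ := by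
  refine ⟨(continuous_const.min continuous_id).aestronglyMeasurable, ?_⟩
  rw [hasFiniteIntegral_iff_norm]
  refine lt_of_le_of_lt (lintegral_mono_ae ?_) h
  filter_upwards [ae_restrict_mem measurableSet_Ioi] with x hx
  rw [norm_of_nonneg (le_min zero_le_one hx.le)]

variable (hα : 0 < α) (h_min : IntegrableOn (fun x => min 1 x) (Set.Ioi 0) μ)
include hα h_min

lemma integrableOn_g0 {y : ℝ} (hy : 0 ≤ y) :
    IntegrableOn (fun x => g0 α x y) (Set.Ioi 0) μ := by
  refine (h_min.const_mul (max 2 (√(2 * α))⁻¹)).mono'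
    (continuous_g0_left α y).aestronglyMeasurable ?_
  filter_upwards [ae_restrict_mem measurableSet_Ioi] with x hx
  rw [norm_of_nonneg (g0_nonneg α hx.le hy)]
  exact g0_le_mul_min_one hα hx.le hy

lemma tendsto_integral_g0_nhdsGT_zero :
    Tendsto (fun y => ∫ x in Set.Ioi 0, g0 α x y ∂μ) (𝓝[>] 0) (𝓝 0) := by
  have h_lim := tendsto_integral_filter_of_dominated_convergence
    (μ := μ.restrict (Set.Ioi 0)) (l := 𝓝[>] (0 : ℝ)) (F := fun y x => g0 α x y)
    (f := fun _ => 0) (fun x => max 2 (√(2 * α))⁻¹ * min 1 x)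
    (Eventually.of_forall fun y => (continuous_g0_left α y).aestronglyMeasurable)
    ?_ (h_min.const_mul _) ?_
  · simpa using h_lim
  · filter_upwards [self_mem_nhdsWithin] with y hy
    filter_upwards [ae_restrict_mem measurableSet_Ioi] with x hx
    rw [norm_of_nonneg (g0_nonneg α hx.le hy.le)]
    exact g0_le_mul_min_one hα hx.le hy.le
  · filter_upwards [ae_restrict_mem measurableSet_Ioi] with x hx
    have := (continuous_g0_right α x).tendsto 0
    rw [g0_zero_right α hx.le] at this
    exact this.mono_left nhdsWithin_le_nhds

lemma measure_Ioi_eq_zero_of_integral_g0_eq_zero {y : ℝ} (hy : 0 < y)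
    (h_integral : ∫ x in Set.Ioi 0, g0 α x y ∂μ = 0) : μ (Set.Ioi 0) = 0 := by
  by_contra h_ne
  have h_support : Function.support (fun x => g0 α x y) ∩ Set.Ioi 0 = Set.Ioi 0 :=
    Set.inter_eq_right.2 fun x hx => (g0_pos hα hx hy).ne'
  have h_pos := (setIntegral_pos_iff_support_of_nonneg_ae
    (ae_restrict_of_forall_mem measurableSet_Ioi fun x hx => g0_nonneg α hx.le hy.le)
    (integrableOn_g0 hα h_min hy.le)).2 (by rw [h_support]; exact pos_iff_ne_zero.2 h_ne)
  exact h_pos.ne' h_integral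

end

/-- For `α > 0` and a positive Borel measure `p₄` on `(0,∞)` with
`∫ min(1,x) p₄(dx) < ∞`: for every `y > 0` the integral `∫ g⁰_α(x,y) p₄(dx)` is
finite, and if `y ↦ e^{√(2α)y}·∫ g⁰_α(x,y) p₄(dx)` is constant on `(0,∞)`,
then `p₄` is the null measure. -/
theorem stmt13 (α : ℝ) (hα : 0 < α) (p₄ : Measure ℝ)
    (hfin : (∫⁻ x in Set.Ioi (0 : ℝ), ENNReal.ofReal (min 1 x) ∂p₄) < ⊤) :
    (∀ y > (0 : ℝ), IntegrableOn (fun x => g0 α x y) (Set.Ioi 0) p₄) ∧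
    ((∃ cst : ℝ, ∀ y ∈ Set.Ioi (0 : ℝ),
        Real.exp (Real.sqrt (2 * α) * y) *
          (∫ x in Set.Ioi (0 : ℝ), g0 α x y ∂p₄) = cst) →
      p₄ (Set.Ioi 0) = 0) := by
  have h_min := integrableOn_min_one_of_lintegral_lt_top hfin
  refine ⟨fun y hy => integrableOn_g0 hα h_min hy.le, ?_⟩
  rintro ⟨cst, hcst⟩
  have h_tendsto : Tendsto (fun y => exp (√(2 * α) * y) * ∫ x in Set.Ioi 0, g0 α x y ∂p₄)
      (𝓝[>] 0) (𝓝 0) := by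
    simpa using (((continuous_const.mul continuous_id).rexp.tendsto 0).mono_left
      nhdsWithin_le_nhds).mul (tendsto_integral_g0_nhdsGT_zero hα h_min)
  have h_cst : cst = 0 :=
    tendsto_nhds_unique (tendsto_const_nhds.congr' (eventually_nhdsWithin_of_forall
      fun y hy => (hcst y hy).symm)) h_tendsto
  have h_integral : ∫ x in Set.Ioi 0, g0 α x 1 ∂p₄ = 0 := by
    simpa [h_cst, (exp_pos _).ne'] using hcst 1 (Set.mem_Ioi.2 one_pos)
  exact measure_Ioi_eq_zero_of_integral_g0_eq_zero hα h_min one_pos h_integral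
end
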